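/- Let A be a d × n integer matrix and Θ := ℝ_{≥0}ⁿ with its Borel σ-algebra. Then B(Θ) = σ(A, R_α, Z : α ∈ ker A); that is, the Borel σ-algebra of ℝ_{≥0}ⁿ is generated by the linear map c ↦ Ac together with the functions R_α for α ∈ ker A and the zero-pattern map Z. -/

import Mathlib

open MeasureTheory

noncomputable section

/-- The action of `g ∈ (ℝ_{>0})ᵈ` on `Θ = ℝ_{≥0}ⁿ`: `(g·c)_j = c_j ∏_i g_i^{a_{ij}}`. -/
def actA {d n : ℕ} (A : Matrix (Fin d) (Fin n) ℤ) (g : Fin d → NNReal)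
    (c : Fin n → NNReal) : Fin n → NNReal :=
  fun j => c j * ∏ i, g i ^ (A i j)

/-- `G·B := {g·c : g ∈ (ℝ_{>0})ᵈ, c ∈ B}` for `B ⊆ Θ = ℝ_{≥0}ⁿ`. -/
def GorbitTheta {d n : ℕ} (A : Matrix (Fin d) (Fin n) ℤ) (B : Set (Fin n → NNReal)) :
    Set (Fin n → NNReal) :=
  {x | ∃ g : Fin d → NNReal, (∀ i, 0 < g i) ∧ ∃ c ∈ B, x = actA A g c}

/-- `ker A := {α ∈ ℝⁿ : Aα = 0}`. -/
def kerA {d n : ℕ} (A : Matrix (Fin d) (Fin n) ℤ) : Set (Fin n → ℝ) :=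
  {α | (A.map (Int.cast : ℤ → ℝ)).mulVec α = 0}

open Classical in
/-- The generalized odds ratio `R_α(c) = ∏_{j ∈ J(α)} c_j^{α_j}` if `c_j ≠ 0` for all
`j ∈ J(α)`, and `0` otherwise, where `J(α) = {j : α_j ≠ 0}`. -/
def Rfun {n : ℕ} (α : Fin n → ℝ) (c : Fin n → NNReal) : ℝ :=
  if ∀ j, α j ≠ 0 → c j ≠ 0 then
    ∏ j ∈ Finset.univ.filter (fun j => α j ≠ 0), (c j : ℝ) ^ (α j)
  else 0

/-- The zero pattern `Z(c) ∈ {0,1}ⁿ`, `Z_j(c) = 1` iff `c_j > 0`. -/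
def Zfun {n : ℕ} (c : Fin n → NNReal) : Fin n → ℝ :=
  fun j => if 0 < c j then 1 else 0

/-! The map `c ↦ (Ac, (R_α(c))_α, Z(c))` is measurable, and injective already for a finite
family of `α`; since `Θ` is standard Borel, an injective measurable map into a countably
separated space is a measurable embedding, so it generates the Borel σ-algebra.

Injectivity: if `c, c'` have the same `Ac` and the same support `S`, then `δ = c - c'` lies in
`ker A` and is supported in `S`, and `R_δ(c) = R_δ(c')` says
`∑_{j ∈ S} (c_j - c'_j)(log c_j - log c'_j) = 0`, a sum of nonnegative terms, so `c = c'`.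
As `δ` depends on the pair, we use a basis of the kernel vectors supported in `S` instead: on
that space `log R_α(c) = α ⬝ᵥ log c` is linear in `α`, so its values on the basis suffice. -/

open Matrix

section OddsRatio

variable {n : ℕ}

lemma Rfun_eq_prod (α : Fin n → ℝ) (c : Fin n → NNReal) :
    Rfun α c = ∏ j ∈ Finset.univ.filter (fun j => α j ≠ 0), (c j : ℝ) ^ (α j) := by
  unfold Rfun
  split_ifs with h
  · rfl
  · push Not at h
    obtain ⟨j, hj, hcj⟩ := h
    refine (Finset.prod_eq_zero (Finset.mem_filter.2 ⟨Finset.mem_univ j, hj⟩) ?_).symm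
    simp [hcj, Real.zero_rpow hj]

lemma measurable_Rfun (α : Fin n → ℝ) : Measurable (Rfun α) := by
  rw [funext (Rfun_eq_prod α)]
  fun_prop

lemma Rfun_eq_exp_dotProduct_log {α : Fin n → ℝ} {c : Fin n → NNReal}
    (h : ∀ j, α j ≠ 0 → c j ≠ 0) :
    Rfun α c = Real.exp (α ⬝ᵥ fun j => Real.log (c j)) := by
  have hterm : ∀ j ∈ Finset.univ.filter (fun j => α j ≠ 0),
      (c j : ℝ) ^ (α j) = Real.exp (α j * Real.log (c j)) := fun j hj => by
    have hc : 0 < (c j : ℝ) :=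
      NNReal.coe_pos.2 (pos_iff_ne_zero.2 (h j (Finset.mem_filter.1 hj).2))
    rw [Real.rpow_def_of_pos hc, mul_comm]
  rw [Rfun_eq_prod, Finset.prod_congr rfl hterm, ← Real.exp_sum, dotProduct]
  congr 1
  refine Finset.sum_subset (Finset.subset_univ _) fun j _ hj => ?_
  simp_all

lemma measurable_Zfun : Measurable (Zfun (n := n)) :=
  measurable_pi_lambda _ fun j =>
    Measurable.ite (measurableSet_lt measurable_const (measurable_pi_apply j))
      measurable_const measurable_const

lemma eq_zero_iff_of_Zfun_eq {c c' : Fin n → NNReal} (h : Zfun c = Zfun c') (j : Fin n) :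
    c j = 0 ↔ c' j = 0 := by
  have := congrFun h j
  simp only [Zfun, pos_iff_ne_zero] at this
  split_ifs at this <;> simp_all

end OddsRatio

lemma sub_mul_log_sub_log_pos {x y : ℝ} (hx : 0 < x) (hy : 0 < y) (hxy : x ≠ y) :
    0 < (x - y) * (Real.log x - Real.log y) := by
  rcases hxy.lt_or_gt with h | h
  · exact mul_pos_of_neg_of_neg (sub_neg.2 h) (sub_neg.2 (Real.log_lt_log hx h))
  · exact mul_pos (sub_pos.2 h) (sub_pos.2 (Real.log_lt_log hy h))

lemma eq_of_sum_sub_mul_log_sub_log_eq_zero {ι : Type*} [Fintype ι] {x y : ι → NNReal}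
    (hzero : ∀ j, x j = 0 ↔ y j = 0)
    (hsum : ∑ j, ((x j : ℝ) - y j) * (Real.log (x j) - Real.log (y j)) = 0) : x = y := by
  have hpos : ∀ j, x j ≠ y j → 0 < ((x j : ℝ) - y j) * (Real.log (x j) - Real.log (y j)) := by
    intro j hne
    have hx : x j ≠ 0 := fun h => hne (h.trans ((hzero j).1 h).symm)
    have hy : y j ≠ 0 := (hzero j).not.1 hx
    exact sub_mul_log_sub_log_pos (NNReal.coe_pos.2 (pos_iff_ne_zero.2 hx))
      (NNReal.coe_pos.2 (pos_iff_ne_zero.2 hy))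
      (NNReal.coe_injective.ne hne)
  have hnonneg : ∀ j ∈ Finset.univ,
      0 ≤ ((x j : ℝ) - y j) * (Real.log (x j) - Real.log (y j)) := fun j _ => by
    by_cases hj : x j = y j
    · simp [hj]
    · exact (hpos j hj).le
  funext j
  by_contra hne
  exact (hpos j hne).ne' ((Finset.sum_eq_zero_iff_of_nonneg hnonneg).1 hsum j (Finset.mem_univ j))

section SupportedKer

variable {m : Type*} {n : ℕ}

def supportedKer (M : Matrix m (Fin n) ℝ) (S : Finset (Fin n)) : Submodule ℝ (Fin n → ℝ) :=
  LinearMap.ker M.mulVecLin ⊓ Submodule.pi (↑S)ᶜ fun _ => ⊥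

lemma mem_supportedKer {M : Matrix m (Fin n) ℝ} {S : Finset (Fin n)} {α : Fin n → ℝ} :
    α ∈ supportedKer M S ↔ M *ᵥ α = 0 ∧ ∀ j ∉ S, α j = 0 := by
  simp [supportedKer, Submodule.mem_pi]

def supportedKerBasis (M : Matrix m (Fin n) ℝ) :
    (Σ S : Finset (Fin n), Fin (Module.finrank ℝ (supportedKer M S))) → Fin n → ℝ :=
  fun i => Module.finBasis ℝ (supportedKer M i.1) i.2

lemma mulVec_supportedKerBasis (M : Matrix m (Fin n) ℝ)
    (i : Σ S : Finset (Fin n), Fin (Module.finrank ℝ (supportedKer M S))) :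
    M *ᵥ supportedKerBasis M i = 0 :=
  (mem_supportedKer.1 (Module.finBasis ℝ (supportedKer M i.1) i.2).2).1

lemma eq_of_mulVec_eq_of_Zfun_eq_of_Rfun_eq (M : Matrix m (Fin n) ℝ) {c c' : Fin n → NNReal}
    (hM : (M *ᵥ fun j => (c j : ℝ)) = M *ᵥ fun j => (c' j : ℝ)) (hZ : Zfun c = Zfun c')
    (hR : ∀ i, Rfun (supportedKerBasis M i) c = Rfun (supportedKerBasis M i) c') :
    c = c' := by
  have hzero := eq_zero_iff_of_Zfun_eq hZ
  set S := Finset.univ.filter fun j => c j ≠ 0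
  set K := supportedKer M S
  set w : Fin n → ℝ := (fun j => Real.log (c j)) - fun j => Real.log (c' j) with hw
  have hsupp : ∀ α ∈ K, ∀ j, α j ≠ 0 → c j ≠ 0 := fun α hα j hj => by
    by_contra hc
    exact hj ((mem_supportedKer.1 hα).2 j (by simp [S, hc]))
  have hsupp' : ∀ α ∈ K, ∀ j, α j ≠ 0 → c' j ≠ 0 := fun α hα j hj =>
    (hzero j).not.1 (hsupp α hα j hj)
  have horth_basis : ∀ k, dotProductBilin ℝ ℝ w (Module.finBasis ℝ K k) = 0 := fun k => by
    have hk : Rfun (Module.finBasis ℝ K k : Fin n → ℝ) c = Rfun (Module.finBasis ℝ K k) c' :=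
      hR ⟨S, k⟩
    have hα := (Module.finBasis ℝ K k).2
    rw [Rfun_eq_exp_dotProduct_log (hsupp _ hα), Rfun_eq_exp_dotProduct_log (hsupp' _ hα)] at hk
    rw [dotProductBilin_apply_apply, hw, sub_dotProduct, dotProduct_comm, Real.exp_injective hk,
      dotProduct_comm, sub_self]
  have horth : ∀ α ∈ K, w ⬝ᵥ α = 0 := fun α hα =>
    LinearMap.congr_fun ((Module.finBasis ℝ K).ext (f₁ := (dotProductBilin ℝ ℝ w) ∘ₗ K.subtype)
      (f₂ := 0) horth_basis) ⟨α, hα⟩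
  have hdiff : ((fun j => (c j : ℝ)) - fun j => (c' j : ℝ)) ∈ K := by
    refine mem_supportedKer.2 ⟨by rw [mulVec_sub, hM, sub_self], fun j hj => ?_⟩
    have hc : c j = 0 := by simpa [S] using hj
    simp [hc, (hzero j).1 hc]
  refine eq_of_sum_sub_mul_log_sub_log_eq_zero hzero ?_
  simpa [hw, dotProduct, mul_comm] using horth _ hdiff

end SupportedKer

theorem eq_of_le_of_measurable_injective {X Y : Type*} [mX : MeasurableSpace X]
    [StandardBorelSpace X] [MeasurableSpace Y] [MeasurableSpace.CountablySeparated Y] {m : MeasurableSpace X}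
    (hm : m ≤ mX) {f : X → Y} (hf : Measurable[m] f) (hinj : Function.Injective f) : mX = m := by
  have hemb : @MeasurableEmbedding X Y mX _ f :=
    @Measurable.measurableEmbedding X Y _ f _ mX _ (hf.mono hm le_rfl) hinj
  refine le_antisymm ?_ hm
  calc mX = MeasurableSpace.comap f ‹_› :=
        (@MeasurableEmbedding.comap_eq X Y mX _ f hemb).symm
    _ ≤ m := hf.comap_le

/-- The Borel σ-algebra of `Θ = ℝ_{≥0}ⁿ` is generated by the linear map
`c ↦ Ac`, the generalized odds ratios `R_α` (`α ∈ ker A`), and the zero-pattern map `Z`. -/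
theorem borel_eq_generated_A_oddsRatio_zeroPattern {d n : ℕ}
    (A : Matrix (Fin d) (Fin n) ℤ) :
    (inferInstance : MeasurableSpace (Fin n → NNReal)) =
      MeasurableSpace.comap
          (fun c : Fin n → NNReal =>
            (A.map (Int.cast : ℤ → ℝ)).mulVec (fun j => ((c j : ℝ))))
          (inferInstance : MeasurableSpace (Fin d → ℝ)) ⊔
        (⨆ α ∈ kerA A,
          MeasurableSpace.comap (Rfun α) (inferInstance : MeasurableSpace ℝ)) ⊔
        MeasurableSpace.comap Zfun (inferInstance : MeasurableSpace (Fin n → ℝ)) := by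
  set M := A.map (Int.cast : ℤ → ℝ)
  refine eq_of_le_of_measurable_injective
    (f := fun c => (M *ᵥ fun j => (c j : ℝ), fun i => Rfun (supportedKerBasis M i) c, Zfun c))
    (sup_le (sup_le (Measurable.comap_le (by fun_prop))
      (iSup₂_le fun α _ => (measurable_Rfun α).comap_le)) measurable_Zfun.comap_le) ?_ ?_
  · refine .prodMk (.of_comap_le (le_sup_left.trans le_sup_left))
      (.prodMk (@measurable_pi_lambda _ _ _ (_ ⊔ _ ⊔ _) _ _ fun i => .of_comap_le ?_)
        (.of_comap_le le_sup_right))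
    exact (le_iSup₂ (f := fun α (_ : α ∈ kerA A) => MeasurableSpace.comap (Rfun α) _)
      _ (mulVec_supportedKerBasis M i)).trans (le_sup_right.trans le_sup_left)
  · intro c c' h
    simp only [Prod.mk.injEq] at h
    exact eq_of_mulVec_eq_of_Zfun_eq_of_Rfun_eq M h.1 h.2.2 (congrFun h.2.1)
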